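/- Directionally filtered backprojection is a Fourier multiplier (formula (D1pa)): Let f be a Schwartz function on ℝ² and let ψ ∈ C^∞(S¹) be even (ψ(−ω) = ψ(ω)). Then for every x ∈ ℝ², ∫_0^{2π} ψ(ω(φ)) G_f(ω(φ), x·ω(φ)) dφ = (1/(4π²)) ∫_{ℝ²} e^{i x·ξ} ψ(ξ/|ξ|) 𝓕f(ξ) dξ; i.e., the limited-angle filtered backprojection f_ψ equals the Fourier multiplier ψ(ξ/|ξ|) applied to f. -/

import Mathlib

open MeasureTheory Real intervalIntegral
open scoped RealInnerProductSpace

noncomputable section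

/-- The plane `ℝ²` as a Euclidean space. -/
abbrev E2 : Type := EuclideanSpace ℝ (Fin 2)

/-- The unit vector `ω(φ) = (cos φ, sin φ)`. -/
def omega (φ : ℝ) : E2 := (WithLp.equiv 2 (Fin 2 → ℝ)).symm ![Real.cos φ, Real.sin φ]

/-- The Fourier transform on `ℝ²`: `𝓕f(ξ) = ∫ e^{−i x·ξ} f(x) dx`. -/
def FT (f : E2 → ℂ) (ξ : E2) : ℂ :=
  ∫ x : E2, Complex.exp (-(Complex.I * (⟪x, ξ⟫ : ℂ))) * f x

/-- The filtered projection `G_f(ω,p) = (1/(8π²)) ∫ e^{i p q} |q| 𝓕f(qω) dq`,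
which equals `ℋℛf` by the Fourier slice theorem. -/
def filtProj (f : E2 → ℂ) (w : E2) (p : ℝ) : ℂ :=
  (1 / (8 * (π : ℂ) ^ 2)) * ∫ q : ℝ, Complex.exp (Complex.I * p * q) * (|q| : ℝ) * FT f (q • w)


open scoped FourierTransform

lemma norm_omega (φ : ℝ) : ‖omega φ‖ = 1 := by
  simp [omega, EuclideanSpace.norm_eq, Fin.sum_univ_two, sq_abs, Real.cos_sq_add_sin_sq]

lemma continuous_omega : Continuous omega := by
  have h : Continuous fun φ : ℝ => ![Real.cos φ, Real.sin φ] := by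
    refine continuous_pi fun i => ?_
    fin_cases i
    · simpa using Real.continuous_cos
    · simpa using Real.continuous_sin
  exact (EuclideanSpace.equiv (Fin 2) ℝ).symm.continuous.comp h

lemma omega_add_pi (φ : ℝ) : omega (φ + π) = -omega φ := by
  ext i
  fin_cases i <;>
    simp [omega, Real.cos_add_pi, Real.sin_add_pi]

lemma omega_periodic : Function.Periodic omega (2 * π) := by
  intro φ
  ext i
  fin_cases i <;> simp [omega, Real.cos_add_two_pi, Real.sin_add_two_pi]

lemma FT_eq (f : E2 → ℂ) (ξ : E2) : FT f ξ = 𝓕 f ((2 * π)⁻¹ • ξ) := by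
  rw [Real.fourier_eq']
  unfold FT
  congr 1; funext v
  rw [smul_eq_mul]
  have h : -2 * π * ⟪v, (2 * π)⁻¹ • ξ⟫ = -⟪v, ξ⟫ := by
    rw [real_inner_smul_right]
    have : (π : ℝ) ≠ 0 := Real.pi_ne_zero
    field_simp
  rw [h]
  congr 1
  push_cast
  ring

lemma FT_continuous (f : SchwartzMap E2 ℂ) : Continuous (FT ⇑f) := by
  have h : FT ⇑f = fun ξ => (SchwartzMap.fourierTransformCLM ℂ f) ((2 * π)⁻¹ • ξ) := by
    funext ξ; rw [FT_eq]; simp; rfl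
  rw [h]
  exact (SchwartzMap.continuous _).comp (continuous_const_smul _)

lemma FT_decay (f : SchwartzMap E2 ℂ) :
    ∃ C : ℝ, 0 ≤ C ∧ ∀ ξ : E2, ‖FT ⇑f ξ‖ ≤ C * ((1 + ‖ξ‖) ^ 4)⁻¹ := by
  set g := SchwartzMap.fourierTransformCLM ℂ f with hg
  set S : ℝ := 2 ^ 4 *
    (Finset.Iic ((4, 0) : ℕ × ℕ)).sup (fun m => SchwartzMap.seminorm ℝ m.1 m.2) g with hS
  have hS0 : 0 ≤ S := by positivity
  refine ⟨8 ^ 4 * S, by positivity, fun ξ => ?_⟩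
  set w : E2 := (2 * π)⁻¹ • ξ with hw
  have hξw : ξ = (2 * π) • w := by
    rw [hw, smul_smul]
    rw [mul_inv_cancel₀ (by positivity : (2 * π : ℝ) ≠ 0), one_smul]
  have h1 : (1 + ‖w‖) ^ 4 * ‖g w‖ ≤ S := by
    simpa [norm_iteratedFDeriv_zero] using
      SchwartzMap.one_add_le_sup_seminorm_apply (𝕜 := ℝ) (m := ((4 : ℕ), (0 : ℕ)))
        le_rfl le_rfl g w
  have hnorm : ‖ξ‖ = 2 * π * ‖w‖ := by
    rw [hξw, norm_smul, Real.norm_eq_abs, abs_of_pos (by positivity)]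
  have h2 : 1 + ‖ξ‖ ≤ 8 * (1 + ‖w‖) := by
    rw [hnorm]
    have hπ : (2 : ℝ) * π ≤ 8 := by nlinarith [Real.pi_le_four]
    nlinarith [norm_nonneg w]
  have hFT : ‖FT ⇑f ξ‖ = ‖g w‖ := by rw [FT_eq]; rfl
  have hpos : (0 : ℝ) < (1 + ‖ξ‖) ^ 4 := by positivity
  rw [← div_eq_mul_inv, le_div_iff₀ hpos, hFT, mul_comm]
  calc (1 + ‖ξ‖) ^ 4 * ‖g w‖ ≤ (8 * (1 + ‖w‖)) ^ 4 * ‖g w‖ := by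
        have h0 : (0:ℝ) ≤ 1 + ‖ξ‖ := by positivity
        gcongr
    _ = 8 ^ 4 * ((1 + ‖w‖) ^ 4 * ‖g w‖) := by ring
    _ ≤ 8 ^ 4 * S := by gcongr

lemma integrable_inv_pow_E2 : Integrable (fun ξ : E2 => ((1 + ‖ξ‖) ^ 4)⁻¹) := by
  have h : Integrable (fun ξ : E2 => (1 + ‖ξ‖) ^ (-(4 : ℝ))) := by
    apply integrable_one_add_norm
    norm_num
  refine h.congr (ae_of_all _ fun ξ => ?_)
  simp only [Real.rpow_neg (by positivity : (0:ℝ) ≤ 1 + ‖ξ‖)]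
  norm_cast

lemma integrable_inv_pow_R : Integrable (fun q : ℝ => ((1 + |q|) ^ 3)⁻¹) := by
  have h : Integrable (fun q : ℝ => (1 + ‖q‖) ^ (-(3 : ℝ))) := by
    apply integrable_one_add_norm
    norm_num
  refine h.congr (ae_of_all _ fun q => ?_)
  simp only [Real.rpow_neg (by positivity : (0:ℝ) ≤ 1 + ‖q‖)]
  rw [Real.norm_eq_abs]; norm_cast

set_option maxHeartbeats 1000000 in
/-- Limited-angle filtered backprojection is the Fourier multiplier `ψ(ξ/|ξ|)`:
for an even smooth `ψ` on the circle (encoded as a function on `ℝ² ∖ {0}`),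
`∫_0^{2π} ψ(ω(φ)) G_f(ω(φ), x·ω(φ)) dφ
  = (1/(4π²)) ∫ e^{i x·ξ} ψ(ξ/|ξ|) 𝓕f(ξ) dξ`. -/
theorem limited_angle_multiplier (f : SchwartzMap E2 ℂ) (ψ : E2 → ℂ)
    (hψ_smooth : ContDiffOn ℝ (⊤ : ℕ∞) ψ {x : E2 | x ≠ 0})
    (hψ_even : ∀ w : E2, ψ (-w) = ψ w) (x : E2) :
    ∫ φ in (0:ℝ)..(2 * π), ψ (omega φ) * filtProj (⇑f) (omega φ) ⟪x, omega φ⟫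
      = (1 / (4 * (π : ℂ) ^ 2)) *
        ∫ ξ : E2, Complex.exp (Complex.I * (⟪x, ξ⟫ : ℂ)) * ψ (‖ξ‖⁻¹ • ξ) * FT (⇑f) ξ := by
  obtain ⟨C, hC0, hC⟩ := FT_decay f
  have homega_ne : ∀ φ, omega φ ≠ 0 := by
    intro φ h0
    have := norm_omega φ
    rw [h0, norm_zero] at this
    norm_num at this
  -- bound for ψ on the sphere
  have hsub : Metric.sphere (0:E2) 1 ⊆ {x : E2 | x ≠ 0} := by
    intro w hw
    simp only [Metric.mem_sphere, dist_zero_right] at hw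
    intro h0
    rw [h0, norm_zero] at hw
    norm_num at hw
  obtain ⟨D, hD⟩ := (isCompact_sphere (0:E2) 1).exists_bound_of_continuousOn
      (hψ_smooth.continuousOn.mono hsub)
  have hD0 : 0 ≤ D := le_trans (norm_nonneg _)
      (hD (omega 0) (by simp [Metric.mem_sphere, dist_zero_right, norm_omega]))
  set F : E2 → ℂ :=
    fun ξ => Complex.exp (Complex.I * (⟪x, ξ⟫ : ℂ)) * ψ (‖ξ‖⁻¹ • ξ) * FT (⇑f) ξ with hFdef
  -- pointwise bound for F
  have hFbound : ∀ ξ : E2, ξ ≠ 0 → ‖F ξ‖ ≤ D * C * ((1 + ‖ξ‖) ^ 4)⁻¹ := by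
    intro ξ hξ
    have h1 : ‖Complex.exp (Complex.I * (⟪x, ξ⟫ : ℂ))‖ = 1 := by
      rw [Complex.norm_exp]
      simp
    have hsph : ‖ξ‖⁻¹ • ξ ∈ Metric.sphere (0:E2) 1 := by
      simp only [Metric.mem_sphere, dist_zero_right, norm_smul, norm_inv, norm_norm]
      exact inv_mul_cancel₀ (norm_ne_zero_iff.2 hξ)
    rw [hFdef]
    simp only [norm_mul, h1, one_mul]
    calc ‖ψ (‖ξ‖⁻¹ • ξ)‖ * ‖FT (⇑f) ξ‖ ≤ D * (C * ((1 + ‖ξ‖) ^ 4)⁻¹) :=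
          mul_le_mul (hD _ hsph) (hC ξ) (norm_nonneg _) hD0
      _ = D * C * ((1 + ‖ξ‖) ^ 4)⁻¹ := by ring
  -- continuity of F away from 0
  have hexp_cont : Continuous fun ξ : E2 => Complex.exp (Complex.I * (⟪x, ξ⟫ : ℂ)) :=
    Complex.continuous_exp.comp (continuous_const.mul
      (Complex.continuous_ofReal.comp (continuous_const.inner continuous_id)))
  have hnorm_cont : ContinuousOn (fun ξ : E2 => ‖ξ‖⁻¹ • ξ) {ξ : E2 | ξ ≠ 0} :=
    (continuous_norm.continuousOn.inv₀ fun ξ hξ => norm_ne_zero_iff.2 hξ).smul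
      continuousOn_id
  have hmaps : ∀ ξ : E2, ξ ≠ 0 → ‖ξ‖⁻¹ • ξ ≠ 0 := fun ξ hξ =>
    smul_ne_zero (inv_ne_zero (norm_ne_zero_iff.2 hξ)) hξ
  have hFcont : ContinuousOn F {ξ : E2 | ξ ≠ 0} := by
    refine (ContinuousOn.mul (hexp_cont.continuousOn) ?_).mul
      (FT_continuous f).continuousOn
    exact hψ_smooth.continuousOn.comp hnorm_cont fun ξ hξ => hmaps ξ hξ
  -- a.e. facts
  have hzero : (volume : Measure E2) {(0:E2)} = 0 := measure_singleton 0
  have hae : ∀ᵐ ξ : E2 ∂volume, ξ ≠ 0 := by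
    rw [ae_iff]
    simp only [not_not, Set.setOf_eq_eq_singleton]
    exact hzero
  have hFmeas : AEStronglyMeasurable F volume := by
    have h1 : AEStronglyMeasurable F (volume.restrict {ξ : E2 | ξ ≠ 0}) :=
      hFcont.aestronglyMeasurable (isOpen_ne.measurableSet)
    have heq : volume.restrict {ξ : E2 | ξ ≠ 0} = volume :=
      Measure.restrict_eq_self_of_ae_mem hae
    rwa [heq] at h1
  have hFint : Integrable F := by
    refine Integrable.mono' (integrable_inv_pow_E2.const_mul (D * C)) hFmeas ?_
    filter_upwards [hae] with ξ hξ using hFbound ξ hξ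
  -- the half-line integrals
  set B : ℝ → ℝ := fun r => D * C * ((1 + |r|) ^ 3)⁻¹ with hBdef
  have hBint : Integrable B := integrable_inv_pow_R.const_mul (D * C)
  have hGB : ∀ φ : ℝ, ∀ q : ℝ, q ≠ 0 → ‖((|q| : ℝ) : ℂ) * F (q • omega φ)‖ ≤ B q := by
    intro φ q hq
    have hne : q • omega φ ≠ 0 := smul_ne_zero hq (homega_ne φ)
    have hnrm : ‖q • omega φ‖ = |q| := by
      rw [norm_smul, norm_omega, Real.norm_eq_abs, mul_one]
    have habs : (0:ℝ) < |q| := abs_pos.2 hq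
    have h1q : (0:ℝ) < 1 + |q| := by linarith
    calc ‖((|q| : ℝ) : ℂ) * F (q • omega φ)‖ = |q| * ‖F (q • omega φ)‖ := by
          rw [norm_mul, Complex.norm_real, Real.norm_eq_abs, abs_abs]
      _ ≤ |q| * (D * C * ((1 + ‖q • omega φ‖) ^ 4)⁻¹) := by
          gcongr
          exact hFbound _ hne
      _ = |q| * (D * C * ((1 + |q|) ^ 4)⁻¹) := by rw [hnrm]
      _ ≤ (1 + |q|) * (D * C * ((1 + |q|) ^ 4)⁻¹) := by
          gcongr
          linarith
      _ = D * C * ((1 + |q|) * ((1 + |q|) ^ 4)⁻¹) := by ring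
      _ = B q := by
          rw [hBdef]
          congr 1
          rw [show (1 + |q|) ^ 4 = (1 + |q|) ^ 3 * (1 + |q|) by ring]
          field_simp
  have habs_Ioi : ∀ φ : ℝ, ∀ r ∈ Set.Ioi (0:ℝ), ‖((r : ℝ) : ℂ) * F (r • omega φ)‖ ≤ B r := by
    intro φ r hr
    have hr0 : (0:ℝ) < r := hr
    have := hGB φ r hr0.ne'
    rwa [abs_of_pos hr0] at this
  set A : ℝ → ℂ := fun φ => ∫ r in Set.Ioi (0:ℝ), ((r : ℝ) : ℂ) * F (r • omega φ) with hAdef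
  have hsmul_cont : ∀ φ : ℝ, Continuous fun r : ℝ => r • omega φ := fun φ =>
    continuous_id.smul continuous_const
  have hmeasA : ∀ φ : ℝ, AEStronglyMeasurable (fun r : ℝ => ((r : ℝ) : ℂ) * F (r • omega φ))
      (volume.restrict (Set.Ioi (0:ℝ))) := by
    intro φ
    refine ContinuousOn.aestronglyMeasurable ?_ measurableSet_Ioi
    refine Complex.continuous_ofReal.continuousOn.mul ?_
    refine hFcont.comp (hsmul_cont φ).continuousOn ?_
    intro r hr
    exact smul_ne_zero (ne_of_gt hr) (homega_ne φ)
  have hintA : ∀ φ : ℝ, IntegrableOn (fun r : ℝ => ((r : ℝ) : ℂ) * F (r • omega φ))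
      (Set.Ioi (0:ℝ)) := by
    intro φ
    refine Integrable.mono' (hBint.restrict) (hmeasA φ) ?_
    rw [ae_restrict_iff' measurableSet_Ioi]
    exact ae_of_all _ (habs_Ioi φ)
  have hAcont : Continuous A := by
    rw [hAdef]
    refine continuous_of_dominated (bound := B) hmeasA ?_ hBint.restrict ?_
    · intro φ
      rw [ae_restrict_iff' measurableSet_Ioi]
      exact ae_of_all _ (habs_Ioi φ)
    · rw [ae_restrict_iff' measurableSet_Ioi]
      refine ae_of_all _ fun r hr => ?_
      refine continuous_const.mul ?_
      refine hFcont.comp_continuous ((continuous_omega.const_smul r)) ?_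
      intro φ
      exact smul_ne_zero (ne_of_gt hr) (homega_ne φ)
  have hAper : Function.Periodic A (2 * π) := by
    intro φ
    simp only [hAdef, omega_periodic φ]
  -- integrability of the full-line integrand
  have huint : ∀ φ : ℝ, Integrable (fun q : ℝ => ((|q| : ℝ) : ℂ) * F (q • omega φ)) := by
    intro φ
    have haeR : ∀ᵐ q : ℝ ∂volume, q ≠ 0 := by
      rw [ae_iff]
      simp only [not_not, Set.setOf_eq_eq_singleton]
      exact measure_singleton 0
    have hmeas : AEStronglyMeasurable (fun q : ℝ => ((|q| : ℝ) : ℂ) * F (q • omega φ))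
        volume := by
      have h1 : ContinuousOn (fun q : ℝ => ((|q| : ℝ) : ℂ) * F (q • omega φ))
          {q : ℝ | q ≠ 0} := by
        refine (Complex.continuous_ofReal.comp continuous_abs).continuousOn.mul ?_
        refine hFcont.comp (hsmul_cont φ).continuousOn ?_
        intro q hq
        exact smul_ne_zero hq (homega_ne φ)
      have h2 : AEStronglyMeasurable (fun q : ℝ => ((|q| : ℝ) : ℂ) * F (q • omega φ))
          (volume.restrict {q : ℝ | q ≠ 0}) :=
        h1.aestronglyMeasurable (isOpen_ne.measurableSet)
      have heq : volume.restrict {q : ℝ | q ≠ 0} = volume :=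
        Measure.restrict_eq_self_of_ae_mem haeR
      rwa [heq] at h2
    refine Integrable.mono' hBint hmeas ?_
    filter_upwards [haeR] with q hq using hGB φ q hq
  -- the key pointwise identity for the angular integrand
  have key : ∀ φ : ℝ, ψ (omega φ) * filtProj (⇑f) (omega φ) ⟪x, omega φ⟫
      = (1 / (8 * (π : ℂ) ^ 2)) * (A φ + A (φ + π)) := by
    intro φ
    rw [filtProj, mul_left_comm]
    congr 1
    rw [← MeasureTheory.integral_const_mul]
    have hcongr : ∫ q : ℝ, ψ (omega φ) *
        (Complex.exp (Complex.I * (⟪x, omega φ⟫ : ℝ) * q) * ((|q| : ℝ) : ℂ) *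
          FT (⇑f) (q • omega φ))
        = ∫ q : ℝ, ((|q| : ℝ) : ℂ) * F (q • omega φ) := by
      refine integral_congr_ae ?_
      have haeR : ∀ᵐ q : ℝ ∂volume, q ≠ 0 := by
        rw [ae_iff]
        simp only [not_not, Set.setOf_eq_eq_singleton]
        exact measure_singleton 0
      filter_upwards [haeR] with q hq
      have hinner : (⟪x, q • omega φ⟫ : ℝ) = q * ⟪x, omega φ⟫ := real_inner_smul_right x _ q
      have hnrm : ‖q • omega φ‖ = |q| := by
        rw [norm_smul, norm_omega, Real.norm_eq_abs, mul_one]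
      have hψq : ψ (‖q • omega φ‖⁻¹ • (q • omega φ)) = ψ (omega φ) := by
        rw [hnrm, smul_smul]
        rcases lt_or_gt_of_ne hq with hq' | hq'
        · rw [abs_of_neg hq']
          have : (-q)⁻¹ * q = -1 := by field_simp
          rw [this, neg_one_smul]
          exact hψ_even _
        · rw [abs_of_pos hq', inv_mul_cancel₀ hq'.ne', one_smul]
      have hexp : Complex.I * (⟪x, omega φ⟫ : ℝ) * q
          = Complex.I * ((⟪x, q • omega φ⟫ : ℝ) : ℂ) := by
        rw [hinner]
        push_cast
        ring
      rw [hFdef]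
      simp only []
      rw [hψq, ← hexp]
      ring
    rw [hcongr]
    -- split the line integral
    have hsplit : ∫ q : ℝ, ((|q| : ℝ) : ℂ) * F (q • omega φ)
        = (∫ q in Set.Iic (0:ℝ), ((|q| : ℝ) : ℂ) * F (q • omega φ))
          + ∫ q in Set.Ioi (0:ℝ), ((|q| : ℝ) : ℂ) * F (q • omega φ) :=
      (integral_Iic_add_Ioi (huint φ).integrableOn (huint φ).integrableOn).symm
    have hIic : (∫ q in Set.Iic (0:ℝ), ((|q| : ℝ) : ℂ) * F (q • omega φ)) = A (φ + π) := by
      have hneg : (∫ q in Set.Ioi (0:ℝ), ((|(-q)| : ℝ) : ℂ) * F ((-q) • omega φ))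
          = ∫ q in Set.Iic (-(0:ℝ)), ((|q| : ℝ) : ℂ) * F (q • omega φ) :=
        integral_comp_neg_Ioi (0:ℝ) (fun q => ((|q| : ℝ) : ℂ) * F (q • omega φ))
      rw [neg_zero] at hneg
      rw [← hneg]
      refine setIntegral_congr_fun measurableSet_Ioi fun r hr => ?_
      have hr0 : (0:ℝ) < r := hr
      have h1 : |(-r)| = r := by rw [abs_neg, abs_of_pos hr0]
      have h2 : (-r) • omega φ = r • omega (φ + π) := by
        rw [omega_add_pi, smul_neg, neg_smul]
      rw [h1, h2]
    have hIoi : (∫ q in Set.Ioi (0:ℝ), ((|q| : ℝ) : ℂ) * F (q • omega φ)) = A φ := by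
      refine setIntegral_congr_fun measurableSet_Ioi fun r hr => ?_
      rw [abs_of_pos (show (0:ℝ) < r from hr)]
    rw [hsplit, hIic, hIoi, add_comm]
  -- LHS computation
  have hπC : (π : ℂ) ≠ 0 := Complex.ofReal_ne_zero.mpr Real.pi_ne_zero
  have hIA : IntervalIntegrable A volume 0 (2 * π) := hAcont.intervalIntegrable _ _
  have hIA' : IntervalIntegrable (fun φ => A (φ + π)) volume 0 (2 * π) :=
    (hAcont.comp (continuous_id.add continuous_const)).intervalIntegrable _ _
  have hshift : (∫ φ in (0:ℝ)..(2 * π), A (φ + π)) = ∫ φ in (0:ℝ)..(2 * π), A φ := by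
    rw [intervalIntegral.integral_comp_add_right]
    have h := hAper.intervalIntegral_add_eq π 0
    rw [zero_add] at h
    rw [show (0:ℝ) + π = π by ring, show (2 * π) + π = π + 2 * π by ring]
    exact h
  have hLHS : (∫ φ in (0:ℝ)..(2 * π), ψ (omega φ) * filtProj (⇑f) (omega φ) ⟪x, omega φ⟫)
      = (1 / (4 * (π : ℂ) ^ 2)) * ∫ φ in (0:ℝ)..(2 * π), A φ := by
    calc (∫ φ in (0:ℝ)..(2 * π), ψ (omega φ) * filtProj (⇑f) (omega φ) ⟪x, omega φ⟫)
        = ∫ φ in (0:ℝ)..(2 * π), (1 / (8 * (π : ℂ) ^ 2)) * (A φ + A (φ + π)) := by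
          simp_rw [key]
      _ = (1 / (8 * (π : ℂ) ^ 2)) *
            ((∫ φ in (0:ℝ)..(2 * π), A φ) + ∫ φ in (0:ℝ)..(2 * π), A (φ + π)) := by
          rw [intervalIntegral.integral_const_mul, intervalIntegral.integral_add hIA hIA']
      _ = (1 / (4 * (π : ℂ) ^ 2)) * ∫ φ in (0:ℝ)..(2 * π), A φ := by
          rw [hshift]
          field_simp
          ring
  -- RHS: polar coordinates
  set T : ℝ × ℝ ≃ᵐ E2 :=
    (MeasurableEquiv.finTwoArrow.symm.trans (MeasurableEquiv.toLp 2 (Fin 2 → ℝ)))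
    with hTdef
  have hT : MeasurePreserving (⇑T) volume volume := by
    exact ((EuclideanSpace.volume_preserving_symm_measurableEquiv_toLp (Fin 2)).symm).comp
      ((volume_preserving_finTwoArrow ℝ).symm)
  have hTpolar : ∀ p : ℝ × ℝ, T (polarCoord.symm p) = p.1 • omega p.2 := by
    intro p
    have h1 : T (polarCoord.symm p)
        = (WithLp.equiv 2 (Fin 2 → ℝ)).symm ![p.1 * Real.cos p.2, p.1 * Real.sin p.2] := by
      simp [hTdef, polarCoord_symm_apply, MeasurableEquiv.coe_toLp,
        MeasurableEquiv.coe_trans, Function.comp]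
    rw [h1, omega, WithLp.equiv_symm_apply, ← WithLp.toLp_smul]
    congr 1
    ext i
    fin_cases i <;> simp
  set G : ℝ × ℝ → ℂ := fun p => ((p.1 : ℝ) : ℂ) * F (p.1 • omega p.2) with hGdef
  have hGcont : ContinuousOn G (Set.Ioi (0:ℝ) ×ˢ Set.Ioo (-π) π) := by
    refine ((Complex.continuous_ofReal.comp continuous_fst).continuousOn).mul ?_
    refine hFcont.comp ((continuous_fst.smul (continuous_omega.comp continuous_snd)).continuousOn) ?_
    intro p hp
    exact smul_ne_zero (ne_of_gt (Set.mem_prod.1 hp).1) (homega_ne _)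
  have hGmeas : AEStronglyMeasurable G
      ((volume.restrict (Set.Ioi (0:ℝ))).prod (volume.restrict (Set.Ioo (-π) π))) := by
    rw [Measure.prod_restrict, ← Measure.volume_eq_prod]
    exact hGcont.aestronglyMeasurable (measurableSet_Ioi.prod measurableSet_Ioo)
  have hGint : Integrable G
      ((volume.restrict (Set.Ioi (0:ℝ))).prod (volume.restrict (Set.Ioo (-π) π))) := by
    refine (integrable_prod_iff hGmeas).2 ⟨?_, ?_⟩
    · rw [ae_restrict_iff' measurableSet_Ioi]
      refine ae_of_all _ fun r hr => ?_
      have hcont : Continuous fun θ : ℝ => G (r, θ) := by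
        show Continuous fun θ : ℝ => ((r : ℝ) : ℂ) * F (r • omega θ)
        refine continuous_const.mul ?_
        refine hFcont.comp_continuous (continuous_omega.const_smul r) ?_
        intro θ
        exact smul_ne_zero (ne_of_gt hr) (homega_ne θ)
      exact (hcont.integrableOn_Icc).mono_set Set.Ioo_subset_Icc_self
    · refine Integrable.mono' ((hBint.const_mul (2 * π)).restrict) ?_ ?_
      · exact (hGmeas.norm).integral_prod_right'
      · rw [ae_restrict_iff' measurableSet_Ioi]
        refine ae_of_all _ fun r hr => ?_
        have hb : ∀ θ ∈ Set.Ioo (-π) π, ‖‖G (r, θ)‖‖ ≤ B r := by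
          intro θ _
          rw [norm_norm]
          exact habs_Ioi θ r hr
        have hmeas2 : AEStronglyMeasurable (fun θ => ‖G (r, θ)‖)
            (volume.restrict (Set.Ioo (-π) π)) := by
          have hcont : Continuous fun θ : ℝ => G (r, θ) := by
            show Continuous fun θ : ℝ => ((r : ℝ) : ℂ) * F (r • omega θ)
            refine continuous_const.mul ?_
            refine hFcont.comp_continuous (continuous_omega.const_smul r) ?_
            intro θ
            exact smul_ne_zero (ne_of_gt hr) (homega_ne θ)
          exact hcont.norm.aestronglyMeasurable
        have hB0 : 0 ≤ B r := by
          rw [hBdef]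
          positivity
        calc ‖∫ θ in Set.Ioo (-π) π, ‖G (r, θ)‖‖
            ≤ B r * (volume (Set.Ioo (-π) π)).toReal :=
              norm_setIntegral_le_of_norm_le_const
                (by rw [Real.volume_Ioo]; exact ENNReal.ofReal_lt_top) hb
          _ = 2 * π * B r := by
              rw [Real.volume_Ioo, ENNReal.toReal_ofReal (by linarith [Real.pi_pos])]
              ring
  have hRHSint : (∫ ξ : E2, F ξ) = ∫ θ in Set.Ioo (-π) π, A θ := by
    calc (∫ ξ : E2, F ξ) = ∫ p : ℝ × ℝ, F (T p) := (hT.integral_comp' F).symm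
      _ = ∫ p in polarCoord.target, p.1 • F (T (polarCoord.symm p)) :=
          (integral_comp_polarCoord_symm (fun p => F (T p))).symm
      _ = ∫ p in Set.Ioi (0:ℝ) ×ˢ Set.Ioo (-π) π, G p := by
          rw [polarCoord_target]
          refine setIntegral_congr_fun (measurableSet_Ioi.prod measurableSet_Ioo) fun p _ => ?_
          rw [hTpolar p, hGdef]
          simp [Complex.real_smul]
      _ = ∫ p, G p ∂((volume.restrict (Set.Ioi (0:ℝ))).prod
            (volume.restrict (Set.Ioo (-π) π))) := by
          rw [Measure.prod_restrict, ← Measure.volume_eq_prod]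
      _ = ∫ θ in Set.Ioo (-π) π, ∫ r in Set.Ioi (0:ℝ), G (r, θ) :=
          integral_prod_symm G hGint
      _ = ∫ θ in Set.Ioo (-π) π, A θ := rfl
  have hIoo : (∫ θ in Set.Ioo (-π) π, A θ) = ∫ φ in (0:ℝ)..(2 * π), A φ := by
    have h1 : (∫ θ in Set.Ioc (-π) π, A θ) = ∫ θ in Set.Ioo (-π) π, A θ :=
      integral_Ioc_eq_integral_Ioo
    have h2 : (∫ θ in (-π:ℝ)..π, A θ) = ∫ θ in Set.Ioc (-π) π, A θ :=
      intervalIntegral.integral_of_le (by linarith [Real.pi_pos])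
    have h3 : (∫ θ in (-π:ℝ)..π, A θ) = ∫ φ in (0:ℝ)..(2 * π), A φ := by
      have h := hAper.intervalIntegral_add_eq (-π) 0
      rw [zero_add, show -π + 2 * π = π by ring] at h
      exact h
    rw [← h1, ← h2, h3]
  rw [hLHS, hRHSint, hIoo]
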